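/- Let (X,Y) be jointly distributed over finite 𝒳×𝒴 and Q over 𝒬 with I(X;Y|Q)=0. Fix α ∈ (0,1) and call a rectangle r ⊆ 𝒳×𝒴 'small' if Pr[(X,Y)∈r] < α. There exists a random variable R over rectangles, jointly distributed with (X,Y,Q), such that: (1) for every q, r with Pr[Q=q, R=r] > 0, the conditional distribution p_{XY|Q=q,R=r} equals p_{XY} conditioned on (X,Y)∈r; and (2) for every q, the union L_q of all small rectangles r with Pr[Q=q,R=r]>0 satisfies Pr[(X,Y) ∈ L_q] ≤ 2√α. -/

import Mathlib

namespace Paper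

open Classical in
/-- Probability of an event under a pmf `μ` on a finite sample space. -/
noncomputable def pe {Ω : Type*} [Fintype Ω] (μ : Ω → ℝ) (E : Ω → Prop) : ℝ :=
  ∑ ω, if E ω then μ ω else 0

/-- Probability that random variable `X` takes value `a`. -/
noncomputable def prob {Ω α : Type*} [Fintype Ω] (μ : Ω → ℝ) (X : Ω → α) (a : α) : ℝ :=
  pe μ (fun ω => X ω = a)

/-- `μ` is a probability mass function. -/
def IsPMF {Ω : Type*} [Fintype Ω] (μ : Ω → ℝ) : Prop :=
  (∀ ω, 0 ≤ μ ω) ∧ ∑ ω, μ ω = 1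

open Classical in
/-- Shannon entropy (in bits) of the random variable `X` under `μ`. -/
noncomputable def H {Ω α : Type*} [Fintype Ω] (μ : Ω → ℝ) (X : Ω → α) : ℝ :=
  -∑ a ∈ Finset.univ.image X, prob μ X a * Real.logb 2 (prob μ X a)

/-- Mutual information `I(X;Y)` in bits. -/
noncomputable def mutInfo {Ω α β : Type*} [Fintype Ω] (μ : Ω → ℝ)
    (X : Ω → α) (Y : Ω → β) : ℝ :=
  H μ X + H μ Y - H μ (fun ω => (X ω, Y ω))

/-- Conditional entropy `H(X|Y)` in bits. -/
noncomputable def condEnt {Ω α β : Type*} [Fintype Ω] (μ : Ω → ℝ)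
    (X : Ω → α) (Y : Ω → β) : ℝ :=
  H μ (fun ω => (X ω, Y ω)) - H μ Y

/-- Conditional mutual information `I(X;Y|Z)` in bits. -/
noncomputable def condMutInfo {Ω α β γ : Type*} [Fintype Ω] (μ : Ω → ℝ)
    (X : Ω → α) (Y : Ω → β) (Z : Ω → γ) : ℝ :=
  H μ (fun ω => (X ω, Z ω)) + H μ (fun ω => (Y ω, Z ω))
    - H μ (fun ω => (X ω, Y ω, Z ω)) - H μ Z

end Paper

/-!
Given `Q = q`, the coordinates `X` and `Y` are independent: Gibbs' inequality turns
`I(X;Y|Q) = 0` into `p(x,y,q) p(q) = p(x,q) p(y,q)`. Combined with the independence of `X` and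
`Y` this gives `p(x,y,q) = p(q) p(x,y) f_q(x) g_q(y)` with `f_q = p(·|q)/p_X` and
`g_q = p(·|q)/p_Y`. The layer-cake decomposition writes `f_q = ∑_A w_A 1_A` over a chain of
superlevel sets `A`, and `g_q` likewise over a chain of sets `B`, so `p(·,·|q)` is a mixture of
`p_XY` conditioned on the rectangles `A × B`; drawing `R = A × B` with the corresponding weight
gives (1). For (2): if `P(A) P(B) < α` then `P(A) < √α` or `P(B) < √α`. The sets `A` of the first
kind form a finite chain, so their union is one of them and has probability below `√α`; the same
holds for the `B`s, and `L_q` is covered by these two events.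
-/

namespace Paper

open MeasureTheory Set InformationTheory

section Events

variable {Ω α β : Type*} [Fintype Ω] {μ : Ω → ℝ}

lemma pe_nonneg (hμ : ∀ ω, 0 ≤ μ ω) (E : Ω → Prop) : 0 ≤ pe μ E :=
  Finset.sum_nonneg fun ω _ => by split_ifs <;> simp [hμ ω]

open Classical in
lemma le_pe (hμ : ∀ ω, 0 ≤ μ ω) {E : Ω → Prop} {ω : Ω} (h : E ω) : μ ω ≤ pe μ E :=
  calc μ ω = if E ω then μ ω else 0 := (if_pos h).symm
    _ ≤ pe μ E := Finset.single_le_sum (f := fun ω => if E ω then μ ω else 0)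
        (fun ω _ => by split_ifs <;> simp [hμ ω]) (Finset.mem_univ ω)

lemma prob_apply_pos (hμ : ∀ ω, 0 ≤ μ ω) (X : Ω → α) {ω : Ω} (hω : 0 < μ ω) :
    0 < prob μ X (X ω) :=
  hω.trans_le (le_pe hμ rfl)

lemma pe_mono (hμ : ∀ ω, 0 ≤ μ ω) {E F : Ω → Prop} (h : ∀ ω, E ω → F ω) : pe μ E ≤ pe μ F :=
  Finset.sum_le_sum fun ω _ => by
    by_cases hE : E ω
    · simp [hE, h ω hE]
    · by_cases hF : F ω <;> simp [hE, hF, hμ ω]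

lemma pe_or_le (hμ : ∀ ω, 0 ≤ μ ω) (E F : Ω → Prop) :
    pe μ (fun ω => E ω ∨ F ω) ≤ pe μ E + pe μ F := by
  rw [pe, pe, pe, ← Finset.sum_add_distrib]
  exact Finset.sum_le_sum fun ω _ => by
    by_cases hE : E ω <;> by_cases hF : F ω <;> simp [hE, hF, hμ ω]

open Classical in
lemma pe_and_const (E : Ω → Prop) (p : Prop) :
    pe μ (fun ω => E ω ∧ p) = if p then pe μ E else 0 := by
  by_cases hp : p
  · simp only [hp, and_true, if_true]
  · simp [hp, pe]

open Classical in
lemma pe_comp [Fintype α] (X : Ω → α) (P : α → Prop) :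
    pe μ (fun ω => P (X ω)) = ∑ a, if P a then prob μ X a else 0 := by
  unfold prob pe
  rw [← Finset.sum_fiberwise (g := X)]
  refine Finset.sum_congr rfl fun a _ => ?_
  rw [Finset.sum_filter]
  split_ifs with ha
  · refine Finset.sum_congr rfl fun ω _ => ?_
    by_cases hω : X ω = a <;> simp [hω, ha]
  · exact Finset.sum_eq_zero fun ω hω => by simp_all

lemma prob_pair (X : Ω → α) (Y : Ω → β) (a : α) (b : β) :
    prob μ (fun ω => (X ω, Y ω)) (a, b) = pe μ (fun ω => X ω = a ∧ Y ω = b) := by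
  simp [prob, Prod.ext_iff]

lemma sum_prob [Fintype α] (X : Ω → α) : ∑ a, prob μ X a = ∑ ω, μ ω := by
  simpa [pe] using (pe_comp (μ := μ) X (fun _ => True)).symm

lemma sum_prob_pair [Fintype α] [Fintype β] (X : Ω → α) (Y : Ω → β) (b : β) :
    ∑ a, prob μ (fun ω => (X ω, Y ω)) (a, b) = prob μ Y b := by
  have := pe_comp (μ := μ) (fun ω => (X ω, Y ω)) (fun p => p.2 = b)
  rw [Fintype.sum_prod_type] at this
  rw [prob, this]
  refine Finset.sum_congr rfl fun a _ => ?_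
  rw [Finset.sum_eq_single b] <;> simp_all

lemma pe_and_eq_mul_of_indep [Fintype α] [Fintype β] (X : Ω → α) (Y : Ω → β)
    (hind : ∀ a b, pe μ (fun ω => X ω = a ∧ Y ω = b)
      = pe μ (fun ω => X ω = a) * pe μ (fun ω => Y ω = b))
    (P : α → Prop) (R : β → Prop) :
    pe μ (fun ω => P (X ω) ∧ R (Y ω)) = pe μ (fun ω => P (X ω)) * pe μ (fun ω => R (Y ω)) := by
  classical
  rw [pe_comp (fun ω => (X ω, Y ω)) (fun p => P p.1 ∧ R p.2), pe_comp X, pe_comp Y,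
    Finset.sum_mul_sum, Fintype.sum_prod_type]
  refine Finset.sum_congr rfl fun a _ => Finset.sum_congr rfl fun b _ => ?_
  rw [prob_pair, hind]
  by_cases ha : P a <;> by_cases hb : R b <;> simp [ha, hb, prob]

lemma pe_exists_mem_le_of_isChain (hμ : ∀ ω, 0 ≤ μ ω) (X : Ω → α) {𝓐 : Finset (Finset α)}
    (h𝓐 : IsChain (· ⊆ ·) (𝓐 : Set (Finset α))) {t : ℝ} (ht : 0 ≤ t)
    (h : ∀ A ∈ 𝓐, pe μ (fun ω => X ω ∈ A) ≤ t) : pe μ (fun ω => ∃ A ∈ 𝓐, X ω ∈ A) ≤ t := by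
  classical
  rcases 𝓐.eq_empty_or_nonempty with rfl | hne
  · simpa [pe] using ht
  have hmax : 𝓐.sup' hne id ∈ 𝓐 := by
    refine Finset.sup'_mem (𝓐 : Set (Finset α)) (fun A hA B hB => ?_) 𝓐 hne id fun A hA => hA
    rcases h𝓐.total hA hB with hAB | hBA
    · simpa [Finset.union_eq_right.2 hAB] using hB
    · simpa [Finset.union_eq_left.2 hBA] using hA
  calc pe μ (fun ω => ∃ A ∈ 𝓐, X ω ∈ A) ≤ pe μ (fun ω => X ω ∈ 𝓐.sup' hne id) :=
        pe_mono hμ fun ω ⟨A, hA, hX⟩ => Finset.le_sup' id hA hX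
    _ ≤ t := h _ hmax

end Events

section Entropy

variable {Ω α β γ : Type*} [Fintype Ω] {μ : Ω → ℝ}

lemma H_eq_sum (X : Ω → α) : H μ X = -∑ ω, μ ω * Real.logb 2 (prob μ X (X ω)) := by
  classical
  rw [H, ← Finset.sum_fiberwise_of_maps_to (g := X) (t := Finset.univ.image X)
    (fun ω _ => Finset.mem_image_of_mem X (Finset.mem_univ ω))]
  congr 1
  refine Finset.sum_congr rfl fun a _ => ?_
  rw [Finset.sum_congr rfl fun ω hω => by rw [(Finset.mem_filter.1 hω).2], ← Finset.sum_mul,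
    Finset.sum_filter]
  rfl

lemma condMutInfo_eq_sum (hμ : ∀ ω, 0 ≤ μ ω) (X : Ω → α) (Y : Ω → β) (Z : Ω → γ) :
    condMutInfo μ X Y Z = ∑ ω, μ ω * Real.logb 2
      (prob μ (fun ω => (X ω, Y ω, Z ω)) (X ω, Y ω, Z ω) * prob μ Z (Z ω)
        / (prob μ (fun ω => (X ω, Z ω)) (X ω, Z ω)
          * prob μ (fun ω => (Y ω, Z ω)) (Y ω, Z ω))) := by
  rw [condMutInfo, H_eq_sum, H_eq_sum, H_eq_sum, H_eq_sum, ← Finset.sum_neg_distrib,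
    ← Finset.sum_neg_distrib, ← Finset.sum_neg_distrib, ← Finset.sum_neg_distrib,
    ← Finset.sum_add_distrib, ← Finset.sum_sub_distrib, ← Finset.sum_sub_distrib]
  refine Finset.sum_congr rfl fun ω _ => ?_
  rcases (hμ ω).eq_or_lt with hω | hω
  · simp [← hω]
  have hXYZ : prob μ (fun ω => (X ω, Y ω, Z ω)) (X ω, Y ω, Z ω) ≠ 0 :=
    (prob_apply_pos hμ _ hω).ne'
  have hXZ : prob μ (fun ω => (X ω, Z ω)) (X ω, Z ω) ≠ 0 := (prob_apply_pos hμ _ hω).ne'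
  have hYZ : prob μ (fun ω => (Y ω, Z ω)) (Y ω, Z ω) ≠ 0 := (prob_apply_pos hμ _ hω).ne'
  have hZ : prob μ Z (Z ω) ≠ 0 := (prob_apply_pos hμ _ hω).ne'
  rw [Real.logb_div (mul_ne_zero hXYZ hZ) (mul_ne_zero hXZ hYZ), Real.logb_mul hXYZ hZ,
    Real.logb_mul hXZ hYZ]
  ring

end Entropy

lemma eq_of_sum_mul_log_div_nonpos {ι : Type*} [Fintype ι] {p q : ι → ℝ} (hp : ∀ i, 0 ≤ p i)
    (hq : ∀ i, 0 ≤ q i) (hpq : ∀ i, q i = 0 → p i = 0) (hsum : ∑ i, q i ≤ ∑ i, p i)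
    (h : ∑ i, p i * Real.log (p i / q i) ≤ 0) : p = q := by
  -- `q · klFun (p / q) = p log (p / q) + q - p` is nonnegative and vanishes only where `p = q`.
  have hterm : ∀ i, q i * klFun (p i / q i) = p i * Real.log (p i / q i) + q i - p i := by
    intro i
    by_cases hqi : q i = 0
    · simp [hqi, hpq i hqi]
    · rw [klFun]; field_simp
  have hnonneg : ∀ i ∈ Finset.univ, 0 ≤ q i * klFun (p i / q i) := fun i _ =>
    mul_nonneg (hq i) (klFun_nonneg (div_nonneg (hp i) (hq i)))
  have hzero := (Finset.sum_eq_zero_iff_of_nonneg hnonneg).1 <| le_antisymm (by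
    simp only [hterm, Finset.sum_sub_distrib, Finset.sum_add_distrib]; linarith)
    (Finset.sum_nonneg hnonneg)
  funext i
  by_cases hqi : q i = 0
  · rw [hqi, hpq i hqi]
  · have := (mul_eq_zero.1 (hzero i (Finset.mem_univ i))).resolve_left hqi
    rwa [klFun_eq_zero_iff (div_nonneg (hp i) (hq i)), div_eq_one_iff_eq hqi] at this

section CondIndep

variable {α β γ : Type*} [Fintype α] [Fintype β] [Fintype γ] {μ : α × β × γ → ℝ}

lemma sum_prob_mul_prob_div_prob (μ : α × β × γ → ℝ) :
    ∑ w : α × β × γ, prob μ (fun w => (w.1, w.2.2)) (w.1, w.2.2)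
      * prob μ (fun w => (w.2.1, w.2.2)) (w.2.1, w.2.2) / prob μ (·.2.2) w.2.2 = ∑ w, μ w :=
  calc _ = ∑ c, (∑ a, prob μ (fun w => (w.1, w.2.2)) (a, c))
          * (∑ b, prob μ (fun w => (w.2.1, w.2.2)) (b, c)) / prob μ (·.2.2) c := by
        simp only [Fintype.sum_prod_type, Finset.sum_mul_sum, Finset.sum_div]
        exact (Finset.sum_congr rfl fun _ _ => Finset.sum_comm).trans Finset.sum_comm
    _ = ∑ c, prob μ (fun w : α × β × γ => w.2.2) c := by
        simp only [sum_prob_pair (fun w : α × β × γ => w.1),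
          sum_prob_pair (fun w : α × β × γ => w.2.1), mul_self_div_self]
    _ = ∑ w, μ w := sum_prob _

theorem eq_mul_div_of_condMutInfo_eq_zero (hμ : IsPMF μ)
    (h : condMutInfo μ (·.1) (·.2.1) (·.2.2) = 0) (x : α) (y : β) (z : γ) :
    μ (x, y, z) = prob μ (fun w => (w.1, w.2.2)) (x, z) * prob μ (fun w => (w.2.1, w.2.2)) (y, z)
      / prob μ (·.2.2) z := by
  set q : α × β × γ → ℝ := fun w => prob μ (fun w => (w.1, w.2.2)) (w.1, w.2.2)
    * prob μ (fun w => (w.2.1, w.2.2)) (w.2.1, w.2.2) / prob μ (·.2.2) w.2.2 with hq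
  have hμ0 := hμ.1
  have hprob : ∀ w, prob μ (fun w : α × β × γ => (w.1, w.2.1, w.2.2)) w = μ w := fun w => by
    rw [prob, pe, Finset.sum_eq_single w (fun w' _ hw' => if_neg hw') (by simp)]
    exact if_pos rfl
  suffices μ = q from congrFun this (x, y, z)
  refine eq_of_sum_mul_log_div_nonpos hμ0 (fun w => ?_) (fun w hw => ?_)
    (sum_prob_mul_prob_div_prob μ).le ?_
  · exact div_nonneg (mul_nonneg (pe_nonneg hμ0 _) (pe_nonneg hμ0 _)) (pe_nonneg hμ0 _)
  · refine ((hμ0 w).eq_or_lt.resolve_right fun hw0 => ?_).symm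
    refine hw.not_gt (div_pos (mul_pos ?_ ?_) ?_) <;> exact prob_apply_pos hμ0 _ hw0
  · have key : ∑ w, μ w * Real.log (μ w / q w)
        = Real.log 2 * condMutInfo μ (·.1) (·.2.1) (·.2.2) := by
      rw [condMutInfo_eq_sum hμ0, Finset.mul_sum]
      refine Finset.sum_congr rfl fun w _ => ?_
      rw [hprob, hq]
      simp only [Real.logb, div_div_eq_mul_div]
      field_simp
    rw [key, h, mul_zero]

end CondIndep

section LayerCake

variable {ι : Type*}

def layerThresholds (a : ι → ℝ) (A : Finset ι) : Set ℝ :=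
  {t | 0 < t ∧ {i | t < a i} = (A : Set ι)}

-- Measuring thresholds avoids sorting the values of `a`: the weights of the sets `A ∋ i`
-- add up to the length of `(0, a i)`.
noncomputable def layerWeight (a : ι → ℝ) (A : Finset ι) : ℝ :=
  volume.real (layerThresholds a A)

lemma measurableSet_layerThresholds [Finite ι] (a : ι → ℝ) (A : Finset ι) :
    MeasurableSet (layerThresholds a A) := by
  have : layerThresholds a A = Ioi 0 ∩ ⋂ i, {t | t < a i ↔ i ∈ A} := by
    ext t; simp [layerThresholds, Set.ext_iff]
  rw [this]
  refine measurableSet_Ioi.inter (MeasurableSet.iInter fun i => ?_)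
  by_cases hi : i ∈ A
  · convert measurableSet_Iio (a := a i) using 1; ext; simp [hi]
  · convert (measurableSet_Iio (a := a i)).compl using 1; ext; simp [hi]

lemma biUnion_layerThresholds [Fintype ι] [DecidableEq ι] (a : ι → ℝ) (i : ι) :
    ⋃ A ∈ Finset.univ.filter (fun A : Finset ι => i ∈ A), layerThresholds a A
      = Ioo 0 (a i) := by
  ext t
  simp only [layerThresholds, Finset.mem_filter, Finset.mem_univ, true_and, mem_iUnion,
    exists_prop, mem_Ioo]
  constructor
  · rintro ⟨A, hiA, ht, hA⟩
    have : i ∈ ({j | t < a j} : Set ι) := by rw [hA]; exact hiA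
    exact ⟨ht, this⟩
  · rintro ⟨ht, hta⟩
    exact ⟨Finset.univ.filter (t < a ·), by simpa using hta, ht, by ext; simp⟩

lemma sum_layerWeight [Fintype ι] [DecidableEq ι] (a : ι → ℝ) {i : ι} (hi : 0 ≤ a i) :
    ∑ A, (if i ∈ A then layerWeight a A else 0) = a i := by
  have hsub : ∀ A ∈ Finset.univ.filter (fun A : Finset ι => i ∈ A),
      layerThresholds a A ⊆ Ioo 0 (a i) := fun A hA =>
    biUnion_layerThresholds a i ▸ subset_biUnion_of_mem (u := layerThresholds a) hA
  have hdisj : PairwiseDisjoint (Finset.univ.filter (fun A : Finset ι => i ∈ A) : Set (Finset ι))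
      (layerThresholds a) := fun A _ B _ hAB =>
    Set.disjoint_left.2 fun t hA hB => hAB (Finset.coe_injective (hA.2.symm.trans hB.2))
  rw [← Finset.sum_filter]
  unfold layerWeight
  rw [← measureReal_biUnion_finset hdisj (fun A _ => measurableSet_layerThresholds a A)
    (fun A hA => ((measure_mono (hsub A hA)).trans_lt measure_Ioo_lt_top).ne),
    biUnion_layerThresholds, Real.volume_real_Ioo_of_le hi, sub_zero]

lemma isChain_layerWeight_ne_zero (a : ι → ℝ) :
    IsChain (· ⊆ ·) {A : Finset ι | layerWeight a A ≠ 0} := by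
  have hne : ∀ A : Finset ι, layerWeight a A ≠ 0 → ∃ t, {i | t < a i} = (A : Set ι) := by
    intro A hA
    by_contra! h
    exact hA (by simp [layerWeight, layerThresholds, h])
  intro A hA B hB _
  obtain ⟨s, hs⟩ := hne A hA
  obtain ⟨t, ht⟩ := hne B hB
  simp only [← Finset.coe_subset, ← hs, ← ht]
  rcases le_total s t with hst | hts
  · exact Or.inr fun i hi => lt_of_le_of_lt hst hi
  · exact Or.inl fun i hi => lt_of_le_of_lt hts hi

end LayerCake

lemma lt_sqrt_or_lt_sqrt_of_mul_lt {a b c : ℝ} (ha : 0 ≤ a) (hb : 0 ≤ b) (h : a * b < c) :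
    a < √c ∨ b < √c := by
  by_contra! hc
  have := mul_le_mul hc.1 hc.2 (Real.sqrt_nonneg c) ha
  rw [Real.mul_self_sqrt ((mul_nonneg ha hb).trans h.le)] at this
  linarith

lemma pe_small_rectangles_le {Ω α β : Type*} [Fintype Ω] {μ : Ω → ℝ} (hμ : ∀ ω, 0 ≤ μ ω)
    (X : Ω → α) (Y : Ω → β)
    (hXY : ∀ (A : Finset α) (B : Finset β), pe μ (fun ω => X ω ∈ A ∧ Y ω ∈ B)
      = pe μ (fun ω => X ω ∈ A) * pe μ (fun ω => Y ω ∈ B))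
    {𝓐 : Finset (Finset α)} (h𝓐 : IsChain (· ⊆ ·) (𝓐 : Set (Finset α)))
    {𝓑 : Finset (Finset β)} (h𝓑 : IsChain (· ⊆ ·) (𝓑 : Set (Finset β))) (c : ℝ) :
    pe μ (fun ω => ∃ A ∈ 𝓐, ∃ B ∈ 𝓑,
      pe μ (fun ω' => X ω' ∈ A ∧ Y ω' ∈ B) < c ∧ X ω ∈ A ∧ Y ω ∈ B) ≤ 2 * √c := by
  classical
  set 𝓐' := 𝓐.filter fun A => pe μ (fun ω => X ω ∈ A) < √c
  set 𝓑' := 𝓑.filter fun B => pe μ (fun ω => Y ω ∈ B) < √c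
  have hcover : ∀ ω, (∃ A ∈ 𝓐, ∃ B ∈ 𝓑,
      pe μ (fun ω' => X ω' ∈ A ∧ Y ω' ∈ B) < c ∧ X ω ∈ A ∧ Y ω ∈ B) →
      (∃ A ∈ 𝓐', X ω ∈ A) ∨ (∃ B ∈ 𝓑', Y ω ∈ B) := by
    rintro ω ⟨A, hA, B, hB, hsmall, hX, hY⟩
    rw [hXY] at hsmall
    rcases lt_sqrt_or_lt_sqrt_of_mul_lt (pe_nonneg hμ _) (pe_nonneg hμ _) hsmall with h | h
    · exact Or.inl ⟨A, Finset.mem_filter.2 ⟨hA, h⟩, hX⟩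
    · exact Or.inr ⟨B, Finset.mem_filter.2 ⟨hB, h⟩, hY⟩
  calc _ ≤ pe μ (fun ω => (∃ A ∈ 𝓐', X ω ∈ A) ∨ (∃ B ∈ 𝓑', Y ω ∈ B)) := pe_mono hμ hcover
    _ ≤ pe μ (fun ω => ∃ A ∈ 𝓐', X ω ∈ A) + pe μ (fun ω => ∃ B ∈ 𝓑', Y ω ∈ B) :=
        pe_or_le hμ _ _
    _ ≤ √c + √c := add_le_add
        (pe_exists_mem_le_of_isChain hμ X
          (h𝓐.mono (Finset.coe_subset.2 (Finset.filter_subset _ _)))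
          (Real.sqrt_nonneg c) fun A hA => (Finset.mem_filter.1 hA).2.le)
        (pe_exists_mem_le_of_isChain hμ Y
          (h𝓑.mono (Finset.coe_subset.2 (Finset.filter_subset _ _)))
          (Real.sqrt_nonneg c) fun B hB => (Finset.mem_filter.1 hB).2.le)
    _ = 2 * √c := by ring

noncomputable def condDensityRatio {Ω α γ : Type*} [Fintype Ω] (μ : Ω → ℝ) (X : Ω → α)
    (Q : Ω → γ) (q : γ) (a : α) : ℝ :=
  prob μ (fun ω => (X ω, Q ω)) (a, q) / (prob μ X a * prob μ Q q)

lemma condDensityRatio_nonneg {Ω α γ : Type*} [Fintype Ω] {μ : Ω → ℝ} (hμ : ∀ ω, 0 ≤ μ ω)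
    (X : Ω → α) (Q : Ω → γ) (q : γ) (a : α) : 0 ≤ condDensityRatio μ X Q q a :=
  div_nonneg (pe_nonneg hμ _) (mul_nonneg (pe_nonneg hμ _) (pe_nonneg hμ _))

section Coupling

variable {𝒳 𝒴 𝒬 : Type*} [Fintype 𝒳] [Fintype 𝒴] [Fintype 𝒬]

noncomputable def rectangleWeight (μ : 𝒳 × 𝒴 × 𝒬 → ℝ) (q : 𝒬) (r : Finset 𝒳 × Finset 𝒴) : ℝ :=
  prob μ (·.2.2) q * layerWeight (condDensityRatio μ (·.1) (·.2.2) q) r.1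
    * layerWeight (condDensityRatio μ (·.2.1) (·.2.2) q) r.2

open Classical in
noncomputable def rectangleCoupling (μ : 𝒳 × 𝒴 × 𝒬 → ℝ) :
    𝒳 × 𝒴 × 𝒬 × (Finset 𝒳 × Finset 𝒴) → ℝ
  | (x, y, q, r) => rectangleWeight μ q r *
      if x ∈ r.1 ∧ y ∈ r.2 then pe μ (fun w => w.1 = x ∧ w.2.1 = y) else 0

variable {μ : 𝒳 × 𝒴 × 𝒬 → ℝ}

theorem eq_mul_condDensityRatio (hμ : IsPMF μ)
    (hind : ∀ x y, pe μ (fun w => w.1 = x ∧ w.2.1 = y)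
      = pe μ (fun w => w.1 = x) * pe μ (fun w => w.2.1 = y))
    (hci : condMutInfo μ (fun w => w.1) (fun w => w.2.1) (fun w => w.2.2) = 0)
    (x : 𝒳) (y : 𝒴) (q : 𝒬) :
    μ (x, y, q) = prob μ (·.2.2) q * pe μ (fun w => w.1 = x ∧ w.2.1 = y)
      * condDensityRatio μ (·.1) (·.2.2) q x * condDensityRatio μ (·.2.1) (·.2.2) q y := by
  have hμ0 := hμ.1
  rw [eq_mul_div_of_condMutInfo_eq_zero hμ hci, hind, condDensityRatio, condDensityRatio]
  simp only [prob]
  have hXQ : pe μ (fun w => (w.1, w.2.2) = (x, q)) ≤ pe μ (fun w => w.1 = x) :=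
    pe_mono hμ0 fun w h => congrArg Prod.fst h
  have hYQ : pe μ (fun w => (w.2.1, w.2.2) = (y, q)) ≤ pe μ (fun w => w.2.1 = y) :=
    pe_mono hμ0 fun w h => congrArg Prod.fst h
  by_cases hX : pe μ (fun w => w.1 = x) = 0
  · have hXQ0 : pe μ (fun w => (w.1, w.2.2) = (x, q)) = 0 :=
      le_antisymm (hX ▸ hXQ) (pe_nonneg hμ0 _)
    rw [hX, hXQ0]
    simp
  by_cases hY : pe μ (fun w => w.2.1 = y) = 0
  · have hYQ0 : pe μ (fun w => (w.2.1, w.2.2) = (y, q)) = 0 :=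
      le_antisymm (hY ▸ hYQ) (pe_nonneg hμ0 _)
    rw [hY, hYQ0]
    simp
  by_cases hQ : pe μ (fun w => w.2.2 = q) = 0
  · simp [hQ]
  field_simp

lemma rectangleWeight_nonneg (hμ : ∀ w, 0 ≤ μ w) (q : 𝒬) (r : Finset 𝒳 × Finset 𝒴) :
    0 ≤ rectangleWeight μ q r :=
  mul_nonneg (mul_nonneg (pe_nonneg hμ _) measureReal_nonneg) measureReal_nonneg

lemma rectangleCoupling_nonneg (hμ : ∀ w, 0 ≤ μ w) (w : 𝒳 × 𝒴 × 𝒬 × (Finset 𝒳 × Finset 𝒴)) :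
    0 ≤ rectangleCoupling μ w := by
  obtain ⟨x, y, q, r⟩ := w
  exact mul_nonneg (rectangleWeight_nonneg hμ q r) (by split_ifs <;> simp [pe_nonneg hμ])

theorem sum_rectangleCoupling (hμ : IsPMF μ)
    (hind : ∀ x y, pe μ (fun w => w.1 = x ∧ w.2.1 = y)
      = pe μ (fun w => w.1 = x) * pe μ (fun w => w.2.1 = y))
    (hci : condMutInfo μ (fun w => w.1) (fun w => w.2.1) (fun w => w.2.2) = 0)
    (x : 𝒳) (y : 𝒴) (q : 𝒬) :
    ∑ r, rectangleCoupling μ (x, y, q, r) = μ (x, y, q) := by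
  classical
  rw [eq_mul_condDensityRatio hμ hind hci,
    ← sum_layerWeight _ (condDensityRatio_nonneg hμ.1 (·.1) (·.2.2) q x),
    ← sum_layerWeight _ (condDensityRatio_nonneg hμ.1 (·.2.1) (·.2.2) q y),
    Fintype.sum_prod_type, mul_assoc, Finset.sum_mul_sum, Finset.mul_sum]
  refine Finset.sum_congr rfl fun A _ => ?_
  rw [Finset.mul_sum]
  refine Finset.sum_congr rfl fun B _ => ?_
  by_cases hx : x ∈ A <;> by_cases hy : y ∈ B <;>
    simp [rectangleCoupling, rectangleWeight, hx, hy]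
  ring

theorem isPMF_rectangleCoupling (hμ : IsPMF μ)
    (hind : ∀ x y, pe μ (fun w => w.1 = x ∧ w.2.1 = y)
      = pe μ (fun w => w.1 = x) * pe μ (fun w => w.2.1 = y))
    (hci : condMutInfo μ (fun w => w.1) (fun w => w.2.1) (fun w => w.2.2) = 0) :
    IsPMF (rectangleCoupling μ) := by
  refine ⟨rectangleCoupling_nonneg hμ.1, ?_⟩
  calc ∑ w, rectangleCoupling μ w = ∑ x, ∑ y, ∑ q, ∑ r, rectangleCoupling μ (x, y, q, r) := by
        simp only [Fintype.sum_prod_type]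
    _ = ∑ x, ∑ y, ∑ q, μ (x, y, q) := by simp only [sum_rectangleCoupling hμ hind hci]
    _ = 1 := by simp only [← hμ.2, Fintype.sum_prod_type]

lemma pe_rectangleCoupling (q : 𝒬) (r : Finset 𝒳 × Finset 𝒴) :
    pe (rectangleCoupling μ) (fun w => w.2.2.1 = q ∧ w.2.2.2 = r)
      = rectangleWeight μ q r * pe μ (fun w => w.1 ∈ r.1 ∧ w.2.1 ∈ r.2) := by
  classical
  have hsum : pe (rectangleCoupling μ) (fun w => w.2.2.1 = q ∧ w.2.2.2 = r)
      = ∑ x, ∑ y, rectangleCoupling μ (x, y, q, r) := by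
    unfold pe
    rw [Fintype.sum_prod_type]
    refine Finset.sum_congr rfl fun x _ => ?_
    rw [Fintype.sum_prod_type]
    refine Finset.sum_congr rfl fun y _ => ?_
    rw [Fintype.sum_prod_type, Finset.sum_eq_single q, Finset.sum_eq_single r] <;> simp_all
  rw [hsum, show pe μ (fun w : 𝒳 × 𝒴 × 𝒬 => w.1 ∈ r.1 ∧ w.2.1 ∈ r.2) = _ from
    pe_comp (fun w : 𝒳 × 𝒴 × 𝒬 => (w.1, w.2.1)) (fun p => p.1 ∈ r.1 ∧ p.2 ∈ r.2),
    Fintype.sum_prod_type, Finset.mul_sum]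
  refine Finset.sum_congr rfl fun x _ => ?_
  rw [Finset.mul_sum]
  refine Finset.sum_congr rfl fun y _ => ?_
  simp [rectangleCoupling, prob_pair]

lemma rectangleCoupling_mul_pe_rectangle (q : 𝒬) (r : Finset 𝒳 × Finset 𝒴) (x : 𝒳) (y : 𝒴) :
    rectangleCoupling μ (x, y, q, r) * pe μ (fun w => w.1 ∈ r.1 ∧ w.2.1 ∈ r.2)
      = pe (rectangleCoupling μ) (fun w => w.2.2.1 = q ∧ w.2.2.2 = r)
        * pe μ (fun w => w.1 = x ∧ w.2.1 = y ∧ x ∈ r.1 ∧ y ∈ r.2) := by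
  have : (fun w : 𝒳 × 𝒴 × 𝒬 => w.1 = x ∧ w.2.1 = y ∧ x ∈ r.1 ∧ y ∈ r.2)
      = fun w => (w.1 = x ∧ w.2.1 = y) ∧ (x ∈ r.1 ∧ y ∈ r.2) := by simp only [and_assoc]
  rw [pe_rectangleCoupling, this, pe_and_const]
  simp only [rectangleCoupling]
  split_ifs <;> ring

lemma pe_small_rectangles_rectangleCoupling_le (hμ : ∀ w, 0 ≤ μ w)
    (hind : ∀ x y, pe μ (fun w => w.1 = x ∧ w.2.1 = y)
      = pe μ (fun w => w.1 = x) * pe μ (fun w => w.2.1 = y)) (c : ℝ) (q : 𝒬) :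
    pe μ (fun w => ∃ r : Finset 𝒳 × Finset 𝒴,
        0 < pe (rectangleCoupling μ) (fun w' => w'.2.2.1 = q ∧ w'.2.2.2 = r) ∧
        pe μ (fun w' => w'.1 ∈ r.1 ∧ w'.2.1 ∈ r.2) < c ∧ w.1 ∈ r.1 ∧ w.2.1 ∈ r.2)
      ≤ 2 * √c := by
  classical
  set 𝓐 := Finset.univ.filter fun A => layerWeight (condDensityRatio μ (·.1) (·.2.2) q) A ≠ 0
  set 𝓑 := Finset.univ.filter fun B => layerWeight (condDensityRatio μ (·.2.1) (·.2.2) q) B ≠ 0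
  have h𝓐 : IsChain (· ⊆ ·) (𝓐 : Set (Finset 𝒳)) := by
    simpa [𝓐] using isChain_layerWeight_ne_zero _
  have h𝓑 : IsChain (· ⊆ ·) (𝓑 : Set (Finset 𝒴)) := by
    simpa [𝓑] using isChain_layerWeight_ne_zero _
  refine le_trans (pe_mono hμ fun w ⟨r, hpos, hsmall, hx, hy⟩ =>
      ⟨r.1, ?_, r.2, ?_, hsmall, hx, hy⟩)
    (pe_small_rectangles_le hμ (·.1) (·.2.1) (fun A B => pe_and_eq_mul_of_indep _ _ hind _ _)
      h𝓐 h𝓑 c)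
  all_goals
    rw [pe_rectangleCoupling, rectangleWeight] at hpos
    simp only [𝓐, 𝓑, Finset.mem_filter, Finset.mem_univ, true_and]
    rintro h0
    simp [h0] at hpos

end Coupling

theorem exists_rectangle_decomposition_general {𝒳 𝒴 𝒬 : Type}
    [Fintype 𝒳] [Fintype 𝒴] [Fintype 𝒬]
    (μ : 𝒳 × 𝒴 × 𝒬 → ℝ) (hμ : IsPMF μ) (α : ℝ)
    (hind : ∀ x y, pe μ (fun w => w.1 = x ∧ w.2.1 = y)
      = pe μ (fun w => w.1 = x) * pe μ (fun w => w.2.1 = y))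
    (hci : condMutInfo μ (fun w => w.1) (fun w => w.2.1) (fun w => w.2.2) = 0) :
    ∃ ν : 𝒳 × 𝒴 × 𝒬 × (Finset 𝒳 × Finset 𝒴) → ℝ, IsPMF ν ∧
      (∀ x y q, (∑ r, ν (x, y, q, r)) = μ (x, y, q)) ∧
      (∀ q r, 0 < pe ν (fun w => w.2.2.1 = q ∧ w.2.2.2 = r) → ∀ x y,
        ν (x, y, q, r) * pe μ (fun w => w.1 ∈ r.1 ∧ w.2.1 ∈ r.2)
          = pe ν (fun w => w.2.2.1 = q ∧ w.2.2.2 = r)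
            * pe μ (fun w => w.1 = x ∧ w.2.1 = y ∧ x ∈ r.1 ∧ y ∈ r.2)) ∧
      (∀ q, pe μ (fun w => ∃ r : Finset 𝒳 × Finset 𝒴,
          0 < pe ν (fun w' => w'.2.2.1 = q ∧ w'.2.2.2 = r) ∧
          pe μ (fun w' => w'.1 ∈ r.1 ∧ w'.2.1 ∈ r.2) < α ∧
          w.1 ∈ r.1 ∧ w.2.1 ∈ r.2)
        ≤ 2 * Real.sqrt α) :=
  ⟨rectangleCoupling μ, isPMF_rectangleCoupling hμ hind hci, sum_rectangleCoupling hμ hind hci,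
    fun q r _ => rectangleCoupling_mul_pe_rectangle q r,
    pe_small_rectangles_rectangleCoupling_le hμ.1 hind α⟩

/-- Claim 5.2: given independent `(X,Y)` and `Q` with
`I(X;Y|Q)=0`, there is a random variable `R` over rectangles, jointly
distributed with `(X,Y,Q)` (i.e. a joint pmf `ν` with marginal `μ`), such that
(1) given `Q=q,R=r` the conditional distribution of `(X,Y)` is `p_{XY}`
conditioned on `(X,Y)∈r` (stated in cross-multiplied form), and (2) for every
`q`, the union of the small rectangles (`Pr[(X,Y)∈r] < α`) occurring with `q`
has probability at most `2√α`. -/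
theorem exists_rectangle_decomposition {𝒳 𝒴 𝒬 : Type}
    [Fintype 𝒳] [Fintype 𝒴] [Fintype 𝒬]
    (μ : 𝒳 × 𝒴 × 𝒬 → ℝ) (hμ : IsPMF μ) (α : ℝ) (hα0 : 0 < α) (hα1 : α < 1)
    (hind : ∀ x y, pe μ (fun w => w.1 = x ∧ w.2.1 = y)
      = pe μ (fun w => w.1 = x) * pe μ (fun w => w.2.1 = y))
    (hci : condMutInfo μ (fun w => w.1) (fun w => w.2.1) (fun w => w.2.2) = 0) :
    ∃ ν : 𝒳 × 𝒴 × 𝒬 × (Finset 𝒳 × Finset 𝒴) → ℝ, IsPMF ν ∧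
      (∀ x y q, (∑ r, ν (x, y, q, r)) = μ (x, y, q)) ∧
      (∀ q r, 0 < pe ν (fun w => w.2.2.1 = q ∧ w.2.2.2 = r) → ∀ x y,
        ν (x, y, q, r) * pe μ (fun w => w.1 ∈ r.1 ∧ w.2.1 ∈ r.2)
          = pe ν (fun w => w.2.2.1 = q ∧ w.2.2.2 = r)
            * pe μ (fun w => w.1 = x ∧ w.2.1 = y ∧ x ∈ r.1 ∧ y ∈ r.2)) ∧
      (∀ q, pe μ (fun w => ∃ r : Finset 𝒳 × Finset 𝒴,
          0 < pe ν (fun w' => w'.2.2.1 = q ∧ w'.2.2.2 = r) ∧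
          pe μ (fun w' => w'.1 ∈ r.1 ∧ w'.2.1 ∈ r.2) < α ∧
          w.1 ∈ r.1 ∧ w.2.1 ∈ r.2)
        ≤ 2 * Real.sqrt α) :=
  exists_rectangle_decomposition_general μ hμ α hind hci

end Paper
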